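/- Let U be an m×n real matrix with n > m, and let (I₁,…,I_q) be a partition of the column index set {1,…,n}. For each k, let A_k be the m×|I_k| submatrix of U whose columns are those of U indexed by I_k. Then sqrt(Σ_{k=1}^q σ_min(A_k)²) ≤ σ_min(U) ≤ σ_max(U) ≤ sqrt(Σ_{k=1}^q σ_max(A_k)²). -/

import Mathlib

open Matrix Finset

/-- Euclidean norm of a finite real vector. -/
noncomputable def eunorm {ι : Type*} [Fintype ι] (x : ι → ℝ) : ℝ :=
  Real.sqrt (∑ i, (x i) ^ 2)

/-- Largest singular value of a real matrix, as the supremum of `‖vᵀ M‖`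
over unit vectors `v`. -/
noncomputable def sigmaMax {ι κ : Type*} [Fintype ι] [Fintype κ]
    (M : Matrix ι κ ℝ) : ℝ :=
  sSup {r | ∃ v : ι → ℝ, eunorm v = 1 ∧ r = eunorm (Matrix.vecMul v M)}

/-- Smallest singular value of a real (wide) matrix, as the infimum of `‖vᵀ M‖`
over unit vectors `v`. -/
noncomputable def sigmaMin {ι κ : Type*} [Fintype ι] [Fintype κ]
    (M : Matrix ι κ ℝ) : ℝ :=
  sInf {r | ∃ v : ι → ℝ, eunorm v = 1 ∧ r = eunorm (Matrix.vecMul v M)}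

namespace ColPartAux

variable {ι κ : Type*} [Fintype ι] [Fintype κ]

/-- The set of norms of `vᵀ M` over unit vectors `v`. -/
def SVset (M : Matrix ι κ ℝ) : Set ℝ :=
  {r | ∃ v : ι → ℝ, eunorm v = 1 ∧ r = eunorm (Matrix.vecMul v M)}

lemma eunorm_nonneg (x : ι → ℝ) : 0 ≤ eunorm x := Real.sqrt_nonneg _

lemma eunorm_sq (x : ι → ℝ) : eunorm x ^ 2 = ∑ i, (x i) ^ 2 :=
  Real.sq_sqrt (Finset.sum_nonneg fun i _ => sq_nonneg _)

lemma sum_sq_of_unit {v : ι → ℝ} (hv : eunorm v = 1) : ∑ i, (v i) ^ 2 = 1 := by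
  have := eunorm_sq v
  rw [hv] at this
  simpa using this.symm

lemma mem_nonneg {M : Matrix ι κ ℝ} {r : ℝ} (hr : r ∈ SVset M) : 0 ≤ r := by
  obtain ⟨v, hv, rfl⟩ := hr; exact eunorm_nonneg _

lemma bddBelow (M : Matrix ι κ ℝ) : BddBelow (SVset M) :=
  ⟨0, fun r hr => mem_nonneg hr⟩

lemma mem_le_frob {M : Matrix ι κ ℝ} {r : ℝ} (hr : r ∈ SVset M) :
    r ≤ Real.sqrt (∑ j, ∑ i, (M i j) ^ 2) := by
  obtain ⟨v, hv, rfl⟩ := hr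
  apply Real.sqrt_le_sqrt
  apply Finset.sum_le_sum
  intro j _
  have h1 : Matrix.vecMul v M j = ∑ i, v i * M i j := by
    simp [Matrix.vecMul, dotProduct]
  rw [h1]
  calc (∑ i, v i * M i j) ^ 2 ≤ (∑ i, (v i) ^ 2) * ∑ i, (M i j) ^ 2 :=
        Finset.sum_mul_sq_le_sq_mul_sq _ _ _
    _ = ∑ i, (M i j) ^ 2 := by rw [sum_sq_of_unit hv, one_mul]

lemma bddAbove (M : Matrix ι κ ℝ) : BddAbove (SVset M) :=
  ⟨_, fun r hr => mem_le_frob hr⟩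

lemma sigmaMax_nonneg (M : Matrix ι κ ℝ) : 0 ≤ sigmaMax M := by
  rcases Set.eq_empty_or_nonempty (SVset M) with h | h
  · simp [sigmaMax, show {r | ∃ v : ι → ℝ, eunorm v = 1 ∧ r = eunorm (Matrix.vecMul v M)} = (∅ : Set ℝ) from h, Real.sSup_empty]
  · obtain ⟨r, hr⟩ := h
    exact le_trans (mem_nonneg hr) (le_csSup (bddAbove M) hr)

lemma sigmaMin_nonneg (M : Matrix ι κ ℝ) : 0 ≤ sigmaMin M := by
  rcases Set.eq_empty_or_nonempty (SVset M) with h | h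
  · simp [sigmaMin, show {r | ∃ v : ι → ℝ, eunorm v = 1 ∧ r = eunorm (Matrix.vecMul v M)} = (∅ : Set ℝ) from h, Real.sInf_empty]
  · exact le_csInf h fun r hr => mem_nonneg hr

lemma sigmaMin_le_mem {M : Matrix ι κ ℝ} {r : ℝ} (hr : r ∈ SVset M) : sigmaMin M ≤ r :=
  csInf_le (bddBelow M) hr

lemma mem_le_sigmaMax {M : Matrix ι κ ℝ} {r : ℝ} (hr : r ∈ SVset M) : r ≤ sigmaMax M :=
  le_csSup (bddAbove M) hr

end ColPartAux

open ColPartAux in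
/-- column-partition bounds on the extreme singular values.
Without loss of generality the columns of `U` are grouped into consecutive
blocks `A k`; we encode the partition by indexing the columns of `U` by the
sigma type `(k : Fin q) × Fin (s k)`. -/
theorem column_partition_singular_value_bounds
    {m q : ℕ} (s : Fin q → ℕ) (hn : m < ∑ k, s k)
    (U : Matrix (Fin m) ((k : Fin q) × Fin (s k)) ℝ)
    (A : (k : Fin q) → Matrix (Fin m) (Fin (s k)) ℝ)
    (hUA : ∀ i k j, U i ⟨k, j⟩ = A k i j) :
    Real.sqrt (∑ k, sigmaMin (A k) ^ 2) ≤ sigmaMin U ∧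
      sigmaMin U ≤ sigmaMax U ∧
      sigmaMax U ≤ Real.sqrt (∑ k, sigmaMax (A k) ^ 2) := by
  -- key decomposition: for any v, ‖vᵀU‖² = ∑_k ‖vᵀ(A k)‖²
  have key : ∀ v : Fin m → ℝ,
      eunorm (Matrix.vecMul v U) ^ 2 = ∑ k, eunorm (Matrix.vecMul v (A k)) ^ 2 := by
    intro v
    rw [eunorm_sq]
    rw [← Finset.univ_sigma_univ, Finset.sum_sigma]
    refine Finset.sum_congr rfl fun k _ => ?_
    rw [eunorm_sq]
    refine Finset.sum_congr rfl fun j _ => ?_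
    congr 1
    simp [Matrix.vecMul, dotProduct, hUA]
  rcases Nat.eq_zero_or_pos m with hm | hm
  · -- m = 0 : all sets of unit vectors are empty, everything is 0
    subst hm
    have hemp : ∀ {κ : Type} [Fintype κ] (M : Matrix (Fin 0) κ ℝ),
        SVset M = (∅ : Set ℝ) := by
      intro κ _ M
      ext r
      simp only [SVset, Set.mem_setOf_eq, Set.mem_empty_iff_false, iff_false]
      rintro ⟨v, hv, -⟩
      have : eunorm v = 0 := by simp [eunorm]
      rw [hv] at this; norm_num at this
    have h1 : sigmaMin U = 0 := by
      show sInf (SVset U) = 0; rw [hemp]; exact Real.sInf_empty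
    have h2 : sigmaMax U = 0 := by
      show sSup (SVset U) = 0; rw [hemp]; exact Real.sSup_empty
    have h3 : ∀ k, sigmaMin (A k) = 0 := fun k => by
      show sInf (SVset (A k)) = 0; rw [hemp]; exact Real.sInf_empty
    refine ⟨?_, by rw [h1, h2], ?_⟩
    · simp [h1, h3]
    · rw [h2]; exact Real.sqrt_nonneg _
  · -- m > 0 : the sets are nonempty
    have hne : ∀ {κ : Type} [Fintype κ] (M : Matrix (Fin m) κ ℝ),
        (SVset M).Nonempty := by
      intro κ _ M
      set i0 : Fin m := ⟨0, hm⟩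
      refine ⟨eunorm (Matrix.vecMul (fun i => if i = i0 then (1:ℝ) else 0) M),
        fun i => if i = i0 then 1 else 0, ?_, rfl⟩
      have : (∑ i, ((if i = i0 then (1:ℝ) else 0)) ^ 2) = 1 := by
        simp [apply_ite (· ^ 2)]
      simp [eunorm, this]
    refine ⟨?_, csInf_le_csSup (hne U) (bddBelow U) (bddAbove U), ?_⟩
    · -- lower bound
      refine le_csInf (hne U) ?_
      rintro r ⟨v, hv, rfl⟩
      have h1 : ∑ k, sigmaMin (A k) ^ 2 ≤ eunorm (Matrix.vecMul v U) ^ 2 := by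
        rw [key v]
        refine Finset.sum_le_sum fun k _ => ?_
        have hmem : eunorm (Matrix.vecMul v (A k)) ∈ SVset (A k) := ⟨v, hv, rfl⟩
        exact pow_le_pow_left₀ (sigmaMin_nonneg _) (sigmaMin_le_mem hmem) 2
      calc Real.sqrt (∑ k, sigmaMin (A k) ^ 2)
          ≤ Real.sqrt (eunorm (Matrix.vecMul v U) ^ 2) := Real.sqrt_le_sqrt h1
        _ = eunorm (Matrix.vecMul v U) := Real.sqrt_sq (eunorm_nonneg _)
    · -- upper bound
      refine csSup_le (hne U) ?_
      rintro r ⟨v, hv, rfl⟩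
      have h1 : eunorm (Matrix.vecMul v U) ^ 2 ≤ ∑ k, sigmaMax (A k) ^ 2 := by
        rw [key v]
        refine Finset.sum_le_sum fun k _ => ?_
        have hmem : eunorm (Matrix.vecMul v (A k)) ∈ SVset (A k) := ⟨v, hv, rfl⟩
        exact pow_le_pow_left₀ (eunorm_nonneg _) (mem_le_sigmaMax hmem) 2
      calc eunorm (Matrix.vecMul v U)
          = Real.sqrt (eunorm (Matrix.vecMul v U) ^ 2) :=
            (Real.sqrt_sq (eunorm_nonneg _)).symm
        _ ≤ Real.sqrt (∑ k, sigmaMax (A k) ^ 2) := Real.sqrt_le_sqrt h1
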